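/- arXiv:2602.18220 — 2 statements merged into one kernel-verified Lean document; each statement's English description precedes it below -/
import Mathlib

section
/- Let D = D(𝒢,m,f) be a Dyer group. Then Cay(D,X_S) contains no induced copy of K₄ minus an edge; that is, there do not exist four distinct vertices g, h, p, q of Cay(D,X_S) such that g, h, p, q are pairwise adjacent except that p and q are not adjacent. -/
universe u

/-! ### Dyer graphs and Dyer groups -/

/-- A Dyer graph: a finite simplicial graph `graph` together with an edge-labelling
`m : E(𝒢) → ℕ_{≥2}` (encoded as a symmetric function on pairs of vertices) and a
vertex-labelling `f : V(𝒢) → ℕ_{≥2} ∪ {∞}`, subject to the compatibility condition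
that `m(e) ≠ 2` forces both endpoints of `e` to have label `2`. -/
structure DyerGraph (V : Type u) [Fintype V] where
  graph : SimpleGraph V
  m : V → V → ℕ
  m_symm : ∀ u v, m u v = m v u
  two_le_m : ∀ u v, graph.Adj u v → 2 ≤ m u v
  f : V → ℕ∞
  two_le_f : ∀ v, 2 ≤ f v
  compat : ∀ u v, graph.Adj u v → m u v ≠ 2 → f u = 2 ∧ f v = 2

/-- The alternating product `a b a b ⋯` with `k` factors, in the free group. -/
def altWord {V : Type u} : ℕ → FreeGroup V → FreeGroup V → FreeGroup V
  | 0, _, _ => 1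
  | k + 1, a, b => a * altWord k b a

namespace DyerGraph

variable {V : Type u} [Fintype V] (Δ : DyerGraph V)

/-- The defining relators of the Dyer group: `x_v ^ f(v) = 1` whenever `f(v) ≠ ∞`,
and `[x_u,x_v]_{m(e)} = [x_v,x_u]_{m(e)}` for every edge `e = {u,v}`. -/
def rels : Set (FreeGroup V) :=
  {r | (∃ v : V, ∃ n : ℕ, Δ.f v = (n : ℕ∞) ∧ r = FreeGroup.of v ^ n) ∨
    (∃ u v : V, Δ.graph.Adj u v ∧
      r = altWord (Δ.m u v) (FreeGroup.of u) (FreeGroup.of v) *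
        (altWord (Δ.m u v) (FreeGroup.of v) (FreeGroup.of u))⁻¹)}

end DyerGraph

/-- The Dyer group `D(𝒢,m,f)` given by the standard presentation. -/
abbrev DyerGroup {V : Type u} [Fintype V] (Δ : DyerGraph V) : Type u :=
  PresentedGroup Δ.rels

namespace DyerGraph

variable {V : Type u} [Fintype V] (Δ : DyerGraph V)

/-- The standard generator `x_v` of the Dyer group. -/
def gen (v : V) : DyerGroup Δ := PresentedGroup.of v

/-- The vertex group of the generator `x_v`:
`{x_v^α : α ∈ ℤ_{f(v)} ∖ {0}}`. -/
def vertexGroup (v : V) : Set (DyerGroup Δ) :=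
  {g | (∃ n : ℕ, Δ.f v = (n : ℕ∞) ∧ ∃ a : ℤ, ¬((n : ℤ) ∣ a) ∧ g = Δ.gen v ^ a) ∨
    (Δ.f v = ⊤ ∧ ∃ a : ℤ, a ≠ 0 ∧ g = Δ.gen v ^ a)}

/-- The finite symmetric generating set `X_S`. -/
def XS : Set (DyerGroup Δ) :=
  {g | ∃ v : V,
    (∃ n : ℕ, Δ.f v = (n : ℕ∞) ∧ ∃ a : ℤ, ¬((n : ℤ) ∣ a) ∧ g = Δ.gen v ^ a) ∨
    (Δ.f v = ⊤ ∧ (g = Δ.gen v ∨ g = (Δ.gen v)⁻¹))}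

/-- The set of syllables `S(X)`. -/
def SX : Set (DyerGroup Δ) := {g | ∃ v : V, g ∈ Δ.vertexGroup v}

end DyerGraph

/-! ### Cayley graphs, paths, cycles and mediangle graphs -/

/-- The Cayley graph of a group `G` with respect to a subset `S`: vertices are the
elements of `G` and `{g,h}` is an edge whenever `g⁻¹ * h ∈ S` (or `h⁻¹ * g ∈ S`;
for symmetric `S` these agree). -/
def cayley (G : Type*) [Group G] (S : Set G) : SimpleGraph G :=
  SimpleGraph.fromRel fun g h => g⁻¹ * h ∈ S

/-- A finite combinatorial path `(v_0, …, v_len)` in a graph, regarded as a function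
`ℕ → V` which is constant equal to `v_len` from `len` on. -/
structure GraphPath {W : Type*} (Γ : SimpleGraph W) where
  len : ℕ
  toFun : ℕ → W
  adj : ∀ i, i < len → Γ.Adj (toFun i) (toFun (i + 1))
  stable : ∀ i, len ≤ i → toFun i = toFun len

/-- A path is geodesic if its length equals the distance between its endpoints. -/
def IsGeodesic {W : Type*} {Γ : SimpleGraph W} (p : GraphPath Γ) : Prop :=
  Γ.dist (p.toFun 0) (p.toFun p.len) = p.len

/-- Two paths `k`-fellow travel if `d(γ(t), α(t)) ≤ k` for all `t`. -/
def FellowTravel {W : Type*} {Γ : SimpleGraph W} (k : ℕ) (p q : GraphPath Γ) : Prop :=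
  ∀ t : ℕ, Γ.dist (p.toFun t) (q.toFun t) ≤ k

/-- A graph has the falsification by fellow-traveller property with constant `k` if every
non-geodesic path is `k`-fellow-travelled by a strictly shorter path with the same
endpoints. -/
def FFTP {W : Type*} (Γ : SimpleGraph W) (k : ℕ) : Prop :=
  ∀ p : GraphPath Γ, ¬ IsGeodesic p →
    ∃ q : GraphPath Γ, q.toFun 0 = p.toFun 0 ∧ q.toFun q.len = p.toFun p.len ∧
      q.len < p.len ∧ FellowTravel k p q

/-- The interval `I(x,y)` between two vertices. -/
def interval {W : Type*} (Γ : SimpleGraph W) (x y : W) : Set W :=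
  {z | Γ.dist x y = Γ.dist x z + Γ.dist z y}

/-- A set of vertices is convex if it contains the interval between any two of its points. -/
def IsConvexSet {W : Type*} (Γ : SimpleGraph W) (s : Set W) : Prop :=
  ∀ x ∈ s, ∀ y ∈ s, interval Γ x y ⊆ s

/-- A combinatorial cycle of length `len ≥ 3` in a graph: an injective map
`ZMod len → W` with consecutive vertices adjacent. -/
structure GraphCycle {W : Type*} (Γ : SimpleGraph W) where
  len : ℕ
  three_le : 3 ≤ len
  toFun : ZMod len → W
  adj : ∀ i : ZMod len, Γ.Adj (toFun i) (toFun (i + 1))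
  inj : Function.Injective toFun

/-- The set of edges of a cycle. -/
def cycleEdges {W : Type*} {Γ : SimpleGraph W} (c : GraphCycle Γ) : Set (Sym2 W) :=
  {e | ∃ i : ZMod c.len, e = s(c.toFun i, c.toFun (i + 1))}

/-- The edge `{x,y}` is an edge of the cycle `c`. -/
def edgeInCycle {W : Type*} {Γ : SimpleGraph W} (c : GraphCycle Γ) (x y : W) : Prop :=
  ∃ i : ZMod c.len,
    (c.toFun i = x ∧ c.toFun (i + 1) = y) ∨ (c.toFun i = y ∧ c.toFun (i + 1) = x)

/-- Triangle condition. -/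
def TriangleCond {W : Type*} (Γ : SimpleGraph W) : Prop :=
  ∀ o x y : W, Γ.dist o x = Γ.dist o y → Γ.Adj x y →
    ∃ z : W, Γ.Adj x z ∧ Γ.Adj y z ∧ z ∈ interval Γ o x ∩ interval Γ o y

/-- No induced copy of `K₄` minus an edge. -/
def NoInducedK4Minus {W : Type*} (Γ : SimpleGraph W) : Prop :=
  ¬ ∃ g h p q : W, g ≠ h ∧ g ≠ p ∧ g ≠ q ∧ h ≠ p ∧ h ≠ q ∧ p ≠ q ∧
    Γ.Adj g h ∧ Γ.Adj g p ∧ Γ.Adj g q ∧ Γ.Adj h p ∧ Γ.Adj h q ∧ ¬ Γ.Adj p q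

/-- Cycle condition. -/
def CycleCond {W : Type*} (Γ : SimpleGraph W) : Prop :=
  ∀ o x y z : W, Γ.dist o z = Γ.dist o x + 1 → Γ.dist o z = Γ.dist o y + 1 →
    Γ.Adj x z → Γ.Adj y z →
    ∃ (c : GraphCycle Γ) (k : ℕ) (i : ZMod c.len),
      c.len = 2 * k ∧ IsConvexSet Γ (Set.range c.toFun) ∧
      edgeInCycle c x z ∧ edgeInCycle c y z ∧ c.toFun i = z ∧
      c.toFun (i + (k : ZMod c.len)) ∈ interval Γ o x ∩ interval Γ o y

/-- Intersection of even cycles condition: any two distinct convex cycles of even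
lengths share at most one edge. -/
def EvenCyclesCond {W : Type*} (Γ : SimpleGraph W) : Prop :=
  ∀ c₁ c₂ : GraphCycle Γ, Even c₁.len → Even c₂.len →
    IsConvexSet Γ (Set.range c₁.toFun) → IsConvexSet Γ (Set.range c₂.toFun) →
    cycleEdges c₁ ≠ cycleEdges c₂ →
    Set.Subsingleton (cycleEdges c₁ ∩ cycleEdges c₂)

/-- A connected graph is mediangle if it satisfies the triangle condition, contains no
induced `K₄` minus an edge, satisfies the cycle condition, and any two distinct convex
even cycles intersect in at most one edge. -/
def IsMediangle {W : Type*} (Γ : SimpleGraph W) : Prop :=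
  Γ.Connected ∧ TriangleCond Γ ∧ NoInducedK4Minus Γ ∧ CycleCond Γ ∧ EvenCyclesCond Γ

/-- The elementary relation generating hyperplanes: two edges lie in a common `3`-cycle,
or they are opposite edges of a common convex cycle of even length. -/
def hypRel {W : Type*} (Γ : SimpleGraph W) (e₁ e₂ : Sym2 W) : Prop :=
  (∃ a b c : W, Γ.Adj a b ∧ Γ.Adj b c ∧ Γ.Adj a c ∧
    e₁ ∈ ({s(a, b), s(b, c), s(a, c)} : Set (Sym2 W)) ∧
    e₂ ∈ ({s(a, b), s(b, c), s(a, c)} : Set (Sym2 W))) ∨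
  (∃ (c : GraphCycle Γ) (k : ℕ) (i : ZMod c.len), c.len = 2 * k ∧
    IsConvexSet Γ (Set.range c.toFun) ∧
    e₁ = s(c.toFun i, c.toFun (i + 1)) ∧
    e₂ = s(c.toFun (i + (k : ZMod c.len)), c.toFun (i + (k : ZMod c.len) + 1)))

/-- Two edges belong to the same hyperplane: equivalence generated by `hypRel`. -/
def sameHyperplane {W : Type*} (Γ : SimpleGraph W) : Sym2 W → Sym2 W → Prop :=
  Relation.EqvGen (hypRel Γ)

/-- A path crosses each hyperplane at most once. -/
def CrossesEachHyperplaneAtMostOnce {W : Type*} {Γ : SimpleGraph W}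
    (p : GraphPath Γ) : Prop :=
  ∀ i j : ℕ, i < p.len → j < p.len → i ≠ j →
    ¬ sameHyperplane Γ s(p.toFun i, p.toFun (i + 1)) s(p.toFun j, p.toFun (j + 1))

/-- A minimal non-geodesic path: a non-geodesic path whose two subpaths obtained by
removing the last, respectively first, edge are geodesic. -/
def MinimalNonGeodesic {W : Type*} {Γ : SimpleGraph W} (p : GraphPath Γ) : Prop :=
  ¬ IsGeodesic p ∧
  Γ.dist (p.toFun 0) (p.toFun (p.len - 1)) = p.len - 1 ∧
  Γ.dist (p.toFun 1) (p.toFun p.len) = p.len - 1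

/-- The edge `{x,y}` is an edge of a `3`-cycle. -/
def EdgeInTriangle {W : Type*} (Γ : SimpleGraph W) (x y : W) : Prop :=
  Γ.Adj x y ∧ ∃ w : W, Γ.Adj x w ∧ Γ.Adj y w

/-- The edge `{x,y}` is an edge of a convex cycle of even length. -/
def EdgeInConvexEvenCycle {W : Type*} (Γ : SimpleGraph W) (x y : W) : Prop :=
  ∃ c : GraphCycle Γ, Even c.len ∧ IsConvexSet Γ (Set.range c.toFun) ∧ edgeInCycle c x y

/-- A dihedral cycle in a Cayley graph of a Dyer group: a cycle of length `2·m(e)` for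
some edge `e = {u,v}` of the Dyer graph, whose consecutive edge labels alternately
belong to the vertex groups of `x_u` and of `x_v`. -/
def DyerGraph.IsDihedral {V : Type u} [Fintype V] (Δ : DyerGraph V)
    {Γ : SimpleGraph (DyerGroup Δ)} (c : GraphCycle Γ) : Prop :=
  ∃ u v : V, Δ.graph.Adj u v ∧ c.len = 2 * Δ.m u v ∧
    ∀ i : ZMod c.len,
      (Even i.val → (c.toFun i)⁻¹ * c.toFun (i + 1) ∈ Δ.vertexGroup u) ∧
      (¬ Even i.val → (c.toFun i)⁻¹ * c.toFun (i + 1) ∈ Δ.vertexGroup v)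

/-! ### Word length and cone types -/

/-- The word length of `g` with respect to the generating set `S`. -/
noncomputable def wordLength {G : Type*} [Group G] (S : Set G) (g : G) : ℕ :=
  sInf {nid | ∃ l : List G, l.length = nid ∧ (∀ s ∈ l, s ∈ S) ∧ l.prod = g}

/-- The cone type of `g`: the set of elements extending `g` geodesically. -/
noncomputable def coneType {G : Type*} [Group G] (S : Set G) (g : G) : Set G :=
  {h | wordLength S (g * h) = wordLength S g + wordLength S h}

/-!
Send `x_v` to the generator of `ℤ_{f(v)}` indexed by the class of `v` under the equivalence
relation generated by the edges of odd label. This is a homomorphism from `D` to an abelian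
group: an even label only imposes commutation, and the endpoints of an odd edge are involutions,
which the target identifies. Applied to a triangle `1, x_t^c, x_w^a` of `Cay(D, X_S)` with
`x_t^{-c} x_w^a = x_s^d ∈ X_S`, it puts `t, w, s` in one class and gives `d ≡ a - c` modulo the
order of that class. In a class of involutions `a, c, d` would all be odd, which is impossible;
every other class is a single vertex, so `w = t`. Moreover `f(t) = ∞` is excluded, as exponents
`±1` never differ by `±1`. Thus in an induced `K₄` minus an edge, translated so that `g = 1`,
the two non-adjacent vertices are distinct powers of one generator of finite order, hence adjacent.
-/

theorem Pi.eq_of_single_sub_single_eq_single {ι : Type*} [DecidableEq ι] {β : ι → Type*}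
    [∀ i, AddGroup (β i)] {i j k : ι} {x : β i} {y : β j} {z : β k}
    (h : Pi.single i x - Pi.single j y = Pi.single k z) (hx : x ≠ 0) (hy : y ≠ 0)
    (hz : z ≠ 0) : i = j ∧ j = k := by
  have hij : i = j := by
    by_contra hij
    have hik : i = k := by
      by_contra hik
      exact hx (by simpa [Pi.single_eq_of_ne hij, Pi.single_eq_of_ne hik] using congrFun h i)
    subst hik
    exact hy (by simpa [Pi.single_eq_of_ne (Ne.symm hij)] using congrFun h j)
  subst hij
  refine ⟨rfl, ?_⟩
  by_contra hik
  exact hz (by simpa [Pi.single_eq_of_ne (Ne.symm hik)] using (congrFun h k).symm)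

theorem map_altWord {α G : Type*} [CommGroup G] (F : FreeGroup α →* G) (k : ℕ)
    (a b : FreeGroup α) : F (altWord k a b) = F a ^ ((k + 1) / 2) * F b ^ (k / 2) := by
  induction k generalizing a b with
  | zero => simp [altWord]
  | succ k ih =>
    rw [altWord, map_mul, ih, show (k + 1 + 1) / 2 = k / 2 + 1 by omega, pow_succ]
    ac_rfl

theorem cayley_adj_iff {G : Type*} [Group G] {S : Set G} (hS : ∀ s ∈ S, s⁻¹ ∈ S)
    {a b : G} : (cayley G S).Adj a b ↔ a ≠ b ∧ a⁻¹ * b ∈ S := by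
  refine (SimpleGraph.fromRel_adj _ a b).trans (and_congr_right fun _ => or_iff_left_of_imp ?_)
  intro h
  simpa using hS _ h

theorem noInducedK4Minus_cayley {G : Type*} [Group G] {S : Set G} (hS : ∀ s ∈ S, s⁻¹ ∈ S)
    (h : ∀ x y z, x ∈ S → y ∈ S → z ∈ S → z⁻¹ * x ∈ S → z⁻¹ * y ∈ S → x ≠ y →
      x⁻¹ * y ∈ S) :
    NoInducedK4Minus (cayley G S) := by
  simp only [NoInducedK4Minus, cayley_adj_iff hS]
  rintro ⟨g, h', p, q, -, -, -, -, -, hpq, ⟨-, hh⟩, ⟨-, hp⟩, ⟨-, hq⟩, ⟨-, hhp⟩, ⟨-, hhq⟩,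
    hnpq⟩
  refine hnpq ⟨hpq, ?_⟩
  have := h (g⁻¹ * p) (g⁻¹ * q) (g⁻¹ * h') hp hq hh (by simpa [mul_assoc] using hhp)
    (by simpa [mul_assoc] using hhq) (by simpa using hpq)
  simpa [mul_assoc] using this

namespace DyerGraph

variable {V : Type u} [Fintype V] (Δ : DyerGraph V)

def OddAdj (u v : V) : Prop := Δ.graph.Adj u v ∧ Odd (Δ.m u v)

variable {Δ} in
theorem OddAdj.f_eq_two {u v : V} (h : Δ.OddAdj u v) : Δ.f u = 2 ∧ Δ.f v = 2 :=
  Δ.compat u v h.1 fun hm => Nat.not_odd_iff_even.2 (hm ▸ even_two) h.2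

def OddClass : Type u := Quot Δ.OddAdj

def oddClass (v : V) : Δ.OddClass := Quot.mk _ v

theorem eq_or_f_eq_two_of_oddClass_eq {u v : V} (h : Δ.oddClass u = Δ.oddClass v) :
    u = v ∨ (Δ.f u = 2 ∧ Δ.f v = 2) := by
  replace h := Quot.eq.1 h
  induction h with
  | rel a b hab => exact Or.inr hab.f_eq_two
  | refl => exact Or.inl rfl
  | symm a b _ ih => exact ih.imp Eq.symm And.symm
  | trans a b c _ _ ih₁ ih₂ =>
    rcases ih₁ with rfl | h₁
    · exact ih₂
    · rcases ih₂ with rfl | h₂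
      · exact Or.inr h₁
      · exact Or.inr ⟨h₁.1, h₂.2⟩

theorem f_eq_of_oddClass_eq {u v : V} (h : Δ.oddClass u = Δ.oddClass v) : Δ.f u = Δ.f v := by
  rcases Δ.eq_or_f_eq_two_of_oddClass_eq h with rfl | ⟨hu, hv⟩
  · rfl
  · rw [hu, hv]

def classOrder : Δ.OddClass → ℕ :=
  Quot.lift (fun v => (Δ.f v).toNat) fun _ _ h => by rw [h.f_eq_two.1, h.f_eq_two.2]

/-- A class of infinite order gets the factor `ZMod 0 = ℤ`, since `(⊤ : ℕ∞).toNat = 0`. -/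
abbrev ClassSum : Type u := (c : Δ.OddClass) → ZMod (Δ.classOrder c)

open Classical in
noncomputable def classExponent : DyerGroup Δ →* Multiplicative Δ.ClassSum :=
  PresentedGroup.toGroup (f := fun v => Multiplicative.ofAdd (Pi.single (Δ.oddClass v) 1)) <| by
    rintro r (⟨v, n, hfv, rfl⟩ | ⟨u, v, hadj, rfl⟩)
    · have hn : Δ.classOrder (Δ.oddClass v) = n := by
        simp [classOrder, oddClass, hfv]
      rw [map_pow, FreeGroup.lift_apply_of, ← ofAdd_nsmul, ← Pi.single_smul, nsmul_one,
        show (n : ZMod (Δ.classOrder (Δ.oddClass v))) = 0 from hn ▸ ZMod.natCast_self _,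
        Pi.single_zero, ofAdd_zero]
    · rw [map_mul, map_inv, mul_inv_eq_one, map_altWord, map_altWord, FreeGroup.lift_apply_of,
        FreeGroup.lift_apply_of]
      rcases Nat.even_or_odd (Δ.m u v) with ⟨k, hk⟩ | hodd
      · rw [show (Δ.m u v + 1) / 2 = Δ.m u v / 2 by omega, mul_comm]
      · rw [show Δ.oddClass u = Δ.oddClass v from Quot.sound ⟨hadj, hodd⟩]

open Classical in
theorem toAdd_classExponent_gen_zpow (v : V) (k : ℤ) :
    (Δ.classExponent (Δ.gen v ^ k)).toAdd =
      Pi.single (Δ.oddClass v) (k : ZMod (Δ.classOrder (Δ.oddClass v))) := by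
  rw [map_zpow, classExponent, gen, PresentedGroup.toGroup.of, toAdd_zpow, toAdd_ofAdd,
    ← Pi.single_smul, zsmul_one]

theorem gen_pow_toNat_f (v : V) : Δ.gen v ^ (Δ.f v).toNat = 1 := by
  cases hf : Δ.f v with
  | top => exact pow_zero _
  | coe n => exact PresentedGroup.one_of_mem (Or.inl ⟨v, n, hf, rfl⟩)

theorem gen_zpow_eq_one_iff {v : V} {k : ℤ} :
    Δ.gen v ^ k = 1 ↔ ((Δ.f v).toNat : ℤ) ∣ k := by
  refine ⟨fun h => ?_, fun ⟨l, hl⟩ => ?_⟩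
  · classical
    have := congrFun (congrArg Multiplicative.toAdd (congrArg Δ.classExponent h)) (Δ.oddClass v)
    rw [toAdd_classExponent_gen_zpow, Pi.single_eq_same] at this
    exact (ZMod.intCast_zmod_eq_zero_iff_dvd k _).1 this
  · rw [hl, zpow_mul, zpow_natCast, gen_pow_toNat_f, one_zpow]

theorem oddClass_eq_of_inv_mul_eq {t w s : V} {c a d : ℤ}
    (h : (Δ.gen t ^ c)⁻¹ * Δ.gen w ^ a = Δ.gen s ^ d) (hc : ¬ ((Δ.f t).toNat : ℤ) ∣ c)
    (ha : ¬ ((Δ.f w).toNat : ℤ) ∣ a) (hd : ¬ ((Δ.f s).toNat : ℤ) ∣ d) :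
    Δ.oddClass w = Δ.oddClass t ∧ Δ.oddClass t = Δ.oddClass s ∧
      ((Δ.f s).toNat : ℤ) ∣ d - (a - c) := by
  classical
  have h := congrArg (fun g => (Δ.classExponent g).toAdd) h
  simp only [map_mul, map_inv, toAdd_mul, toAdd_inv, toAdd_classExponent_gen_zpow,
    neg_add_eq_sub] at h
  obtain ⟨hwt, hts⟩ := Pi.eq_of_single_sub_single_eq_single h
    ((ZMod.intCast_zmod_eq_zero_iff_dvd _ _).not.2 ha)
    ((ZMod.intCast_zmod_eq_zero_iff_dvd _ _).not.2 hc)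
    ((ZMod.intCast_zmod_eq_zero_iff_dvd _ _).not.2 hd)
  refine ⟨hwt, hts, ?_⟩
  rw [hwt, hts, ← Pi.single_sub, ← Int.cast_sub] at h
  exact (ZMod.intCast_eq_intCast_iff_dvd_sub _ _ _).1 (Pi.single_injective (Δ.oddClass s) h)

theorem eq_of_inv_mul_eq {t w s : V} {c a d : ℤ}
    (h : (Δ.gen t ^ c)⁻¹ * Δ.gen w ^ a = Δ.gen s ^ d) (hc : ¬ ((Δ.f t).toNat : ℤ) ∣ c)
    (ha : ¬ ((Δ.f w).toNat : ℤ) ∣ a) (hd : ¬ ((Δ.f s).toNat : ℤ) ∣ d) : t = w := by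
  obtain ⟨hwt, hts, hdvd⟩ := Δ.oddClass_eq_of_inv_mul_eq h hc ha hd
  refine (Δ.eq_or_f_eq_two_of_oddClass_eq hwt.symm).resolve_right fun ⟨ht, hw⟩ => ?_
  have hs : Δ.f s = 2 := (Δ.f_eq_of_oddClass_eq hts).symm.trans ht
  simp only [hw, ht, hs, ENat.toNat_ofNat, Nat.cast_ofNat] at hc ha hd hdvd
  omega

/-- The exponents `k` with `x_v ^ k` listed in `X_S`; when `f v = ⊤` the divisibility clause
says `k ≠ 0`, since `(⊤ : ℕ∞).toNat = 0`. -/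
def IsXSExponent (v : V) (k : ℤ) : Prop :=
  ¬ ((Δ.f v).toNat : ℤ) ∣ k ∧ (Δ.f v = ⊤ → k = 1 ∨ k = -1)

theorem mem_XS_iff {x : DyerGroup Δ} :
    x ∈ Δ.XS ↔ ∃ v k, Δ.IsXSExponent v k ∧ Δ.gen v ^ k = x := by
  constructor
  · rintro ⟨v, ⟨n, hf, k, hk, rfl⟩ | ⟨hf, rfl | rfl⟩⟩
    · exact ⟨v, k, ⟨by simpa [hf] using hk, by simp [hf]⟩, rfl⟩
    · exact ⟨v, 1, ⟨by simp [hf], fun _ => Or.inl rfl⟩, zpow_one _⟩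
    · exact ⟨v, -1, ⟨by simp [hf], fun _ => Or.inr rfl⟩, zpow_neg_one _⟩
  · rintro ⟨v, k, ⟨hk, htop⟩, rfl⟩
    cases hf : Δ.f v with
    | top => exact ⟨v, Or.inr ⟨hf, (htop hf).imp (by rintro rfl; exact zpow_one _)
        (by rintro rfl; exact zpow_neg_one _)⟩⟩
    | coe n => exact ⟨v, Or.inl ⟨n, hf, k, by simpa [hf] using hk, rfl⟩⟩

theorem inv_mem_XS {x : DyerGroup Δ} (hx : x ∈ Δ.XS) : x⁻¹ ∈ Δ.XS := by
  obtain ⟨v, k, ⟨hk, htop⟩, rfl⟩ := Δ.mem_XS_iff.1 hx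
  refine Δ.mem_XS_iff.2 ⟨v, -k, ⟨by rwa [dvd_neg], fun hf => ?_⟩, zpow_neg _ _⟩
  rcases htop hf with rfl | rfl <;> simp

theorem f_ne_top_of_inv_mul_eq {t s : V} {c a d : ℤ}
    (h : (Δ.gen t ^ c)⁻¹ * Δ.gen t ^ a = Δ.gen s ^ d) (hc : Δ.IsXSExponent t c)
    (ha : Δ.IsXSExponent t a) (hd : Δ.IsXSExponent s d) : Δ.f t ≠ ⊤ := by
  intro ht
  obtain ⟨-, hts, hdvd⟩ := Δ.oddClass_eq_of_inv_mul_eq h hc.1 ha.1 hd.1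
  have hs : Δ.f s = ⊤ := (Δ.f_eq_of_oddClass_eq hts).symm.trans ht
  simp only [hs, ENat.toNat_top, Nat.cast_zero, zero_dvd_iff] at hdvd
  rcases hc.2 ht with rfl | rfl <;> rcases ha.2 ht with rfl | rfl <;>
    rcases hd.2 hs with rfl | rfl <;> omega

end DyerGraph

/-- The Cayley graph `Cay(D, X_S)` of a Dyer group contains no induced
copy of `K₄` minus an edge. -/
theorem dyer_cayley_XS_noK4minus {V : Type u} [Fintype V] (Δ : DyerGraph V) :
    NoInducedK4Minus (cayley (DyerGroup Δ) Δ.XS) := by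
  refine noInducedK4Minus_cayley (fun _ => Δ.inv_mem_XS) fun x y z hx hy hz hzx hzy hxy => ?_
  obtain ⟨t, c, hc, rfl⟩ := Δ.mem_XS_iff.1 hz
  obtain ⟨w, a, ha, rfl⟩ := Δ.mem_XS_iff.1 hx
  obtain ⟨w', b, hb, rfl⟩ := Δ.mem_XS_iff.1 hy
  obtain ⟨s, d, hd, hs⟩ := Δ.mem_XS_iff.1 hzx
  obtain ⟨s', d', hd', hs'⟩ := Δ.mem_XS_iff.1 hzy
  obtain rfl := Δ.eq_of_inv_mul_eq hs.symm hc.1 ha.1 hd.1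
  obtain rfl := Δ.eq_of_inv_mul_eq hs'.symm hc.1 hb.1 hd'.1
  have hab : ¬ ((Δ.f t).toNat : ℤ) ∣ -a + b := by
    rwa [← Δ.gen_zpow_eq_one_iff, zpow_add, zpow_neg, inv_mul_eq_one]
  have hfin : Δ.f t ≠ ⊤ := Δ.f_ne_top_of_inv_mul_eq hs.symm hc ha hd
  rw [← zpow_neg, ← zpow_add]
  exact Δ.mem_XS_iff.2 ⟨t, -a + b, ⟨hab, fun htop => absurd htop hfin⟩, rfl⟩
end

section
/- Let D = D(𝒢,m,f) be a Dyer group, M := max{m(e) : e ∈ E(𝒢)}, and let γ = (v_0,…,v_n) be a path in Cay(D,X_S). Suppose 𝒞 is a dihedral cycle of length 2m such that γ ∩ 𝒞 is the subpath (v_i, v_{i+1},…,v_{i+m}) of γ, a subsegment of 𝒞 of length m = ℓ(𝒞)/2. Let γ̃ = (v_0,…,v_i, ṽ_{i+1},…,ṽ_{i+m−1}, v_{i+m},…,v_n) be the path obtained by replacing this subsegment with the complementary arc 𝒞 ∖ (v_i,…,v_{i+m}) of 𝒞 (the flip). Then ℓ(γ̃) = ℓ(γ) and the paths γ and γ̃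 M-fellow travel. -/
universe u

/-! The flip runs backwards along the cycle, through `C (j - t)` instead of `C (j + t)`. Since
`C` has length `2k`, any two of its vertices are at distance at most `k`, and `k = m(e) ≤ M`. -/

namespace GraphCycle

variable {W : Type*} {Γ : SimpleGraph W} (c : GraphCycle Γ)

instance : NeZero c.len := ⟨by have := c.three_le; omega⟩

lemma adj_sub_one (a : ZMod c.len) : Γ.Adj (c.toFun a) (c.toFun (a - 1)) := by
  simpa using (c.adj (a - 1)).symm

lemma exists_walk_length_eq (a : ZMod c.len) (t : ℕ) :
    ∃ w : Γ.Walk (c.toFun a) (c.toFun (a + t)), w.length = t := by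
  induction t with
  | zero => exact ⟨SimpleGraph.Walk.nil.copy rfl (by simp), by simp⟩
  | succ t ih =>
    obtain ⟨w, hw⟩ := ih
    refine ⟨(w.concat (c.adj _)).copy rfl (by push_cast; rw [add_assoc]), ?_⟩
    simp [hw]

lemma dist_le_of_add (a : ZMod c.len) (t : ℕ) :
    Γ.dist (c.toFun a) (c.toFun (a + t)) ≤ t := by
  obtain ⟨w, hw⟩ := c.exists_walk_length_eq a t
  exact (SimpleGraph.dist_le w).trans hw.le

/-- Going around the cycle in the shorter direction. -/
lemma two_mul_dist_le_len (a b : ZMod c.len) :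
    2 * Γ.dist (c.toFun a) (c.toFun b) ≤ c.len := by
  set n := (b - a).val
  have hn : n < c.len := ZMod.val_lt _
  have forward : Γ.dist (c.toFun a) (c.toFun b) ≤ n := by
    simpa [n] using c.dist_le_of_add a n
  have backward : Γ.dist (c.toFun b) (c.toFun a) ≤ c.len - n := by
    have : b + ((c.len - n : ℕ) : ZMod c.len) = a := by
      simp [Nat.cast_sub hn.le, n]
    simpa [this] using c.dist_le_of_add b (c.len - n)
  rw [SimpleGraph.dist_comm] at backward
  omega

end GraphCycle

namespace GraphPath

variable {W : Type*} {Γ : SimpleGraph W}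

def spliceFun (p : ℕ → W) (i k : ℕ) (g : ℕ → W) (t : ℕ) : W :=
  if i ≤ t ∧ t ≤ i + k then g (t - i) else p t

lemma spliceFun_add {p : ℕ → W} {i k : ℕ} {g : ℕ → W} {t : ℕ} (ht : t ≤ k) :
    spliceFun p i k g (i + t) = g t := by
  simp [spliceFun, ht]

lemma spliceFun_of_le_or_le {p : ℕ → W} {i k : ℕ} {g : ℕ → W}
    (hstart : g 0 = p i) (hend : g k = p (i + k)) {t : ℕ} (ht : t ≤ i ∨ i + k ≤ t) :
    spliceFun p i k g t = p t := by
  unfold spliceFun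
  split_ifs with hin
  · rcases (by omega : t = i ∨ t = i + k) with rfl | rfl
    · simpa using hstart
    · simpa using hend
  · rfl

def splice (p : GraphPath Γ) (i k : ℕ) (g : ℕ → W)
    (hadj : ∀ t < k, Γ.Adj (g t) (g (t + 1))) (hstart : g 0 = p.toFun i)
    (hend : g k = p.toFun (i + k)) (hik : i + k ≤ p.len) : GraphPath Γ where
  len := p.len
  toFun := spliceFun p.toFun i k g
  adj t ht := by
    by_cases hout : t + 1 ≤ i ∨ i + k ≤ t
    · rw [spliceFun_of_le_or_le hstart hend (by omega),
        spliceFun_of_le_or_le hstart hend (by omega)]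
      exact p.adj t ht
    · obtain ⟨s, rfl⟩ : ∃ s, t = i + s := ⟨t - i, by omega⟩
      rw [spliceFun_add (by omega), add_assoc, spliceFun_add (by omega)]
      exact hadj s (by omega)
  stable t ht := by
    rw [spliceFun_of_le_or_le hstart hend (by omega),
      spliceFun_of_le_or_le hstart hend (by omega)]
    exact p.stable t ht

variable (p : GraphPath Γ) {i k : ℕ} {g : ℕ → W}
  (hadj : ∀ t < k, Γ.Adj (g t) (g (t + 1))) (hstart : g 0 = p.toFun i)
  (hend : g k = p.toFun (i + k)) (hik : i + k ≤ p.len)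

lemma splice_apply_of_le_or_le {t : ℕ} (ht : t ≤ i ∨ i + k ≤ t) :
    (p.splice i k g hadj hstart hend hik).toFun t = p.toFun t :=
  spliceFun_of_le_or_le hstart hend ht

lemma splice_apply_add {t : ℕ} (ht : t ≤ k) :
    (p.splice i k g hadj hstart hend hik).toFun (i + t) = g t :=
  spliceFun_add ht

lemma fellowTravel_splice {K : ℕ} (hg : ∀ t ≤ k, Γ.dist (p.toFun (i + t)) (g t) ≤ K) :
    FellowTravel K p (p.splice i k g hadj hstart hend hik) := by
  intro t
  by_cases hout : t ≤ i ∨ i + k ≤ t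
  · simp [splice_apply_of_le_or_le p hadj hstart hend hik hout]
  · obtain ⟨s, rfl⟩ : ∃ s, t = i + s := ⟨t - i, by omega⟩
    rw [splice_apply_add p hadj hstart hend hik (by omega)]
    exact hg s (by omega)

end GraphPath

lemma DyerGraph.IsDihedral.len_le {V : Type u} [Fintype V] {Δ : DyerGraph V}
    {Γ : SimpleGraph (DyerGroup Δ)} {C : GraphCycle Γ} (hC : Δ.IsDihedral C) :
    C.len ≤ 2 * sSup {n : ℕ | ∃ u v : V, Δ.graph.Adj u v ∧ Δ.m u v = n} := by
  obtain ⟨u, v, huv, hlen, -⟩ := hC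
  have hfin : {n : ℕ | ∃ u v : V, Δ.graph.Adj u v ∧ Δ.m u v = n}.Finite :=
    (Set.finite_range fun p : V × V => Δ.m p.1 p.2).subset
      (by rintro n ⟨u, v, -, rfl⟩; exact ⟨(u, v), rfl⟩)
  rw [hlen]
  exact Nat.mul_le_mul_left 2 (le_csSup hfin.bddAbove ⟨u, v, huv, rfl⟩)

theorem dyer_flip_general {V : Type u} [Fintype V] (Δ : DyerGraph V) (M : ℕ)
    (hM : M = sSup {n : ℕ | ∃ u v : V, Δ.graph.Adj u v ∧ Δ.m u v = n})
    (γ : GraphPath (cayley (DyerGroup Δ) Δ.XS))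
    (C : GraphCycle (cayley (DyerGroup Δ) Δ.XS)) (hC : Δ.IsDihedral C)
    (k : ℕ) (hlen : C.len = 2 * k)
    (i : ℕ) (hik : i + k ≤ γ.len) (j : ZMod C.len)
    (hsub : ∀ t : ℕ, t ≤ k → γ.toFun (i + t) = C.toFun (j + (t : ZMod C.len))) :
    ∃ γ' : GraphPath (cayley (DyerGroup Δ) Δ.XS),
      γ'.len = γ.len ∧
      (∀ t : ℕ, t ≤ i → γ'.toFun t = γ.toFun t) ∧
      (∀ t : ℕ, i + k ≤ t → γ'.toFun t = γ.toFun t) ∧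
      (∀ t : ℕ, t ≤ k → γ'.toFun (i + t) = C.toFun (j - (t : ZMod C.len))) ∧
      FellowTravel M γ γ' := by
  have hkM : k ≤ M := by
    have hCM := hC.len_le
    rw [← hM] at hCM
    omega
  have hk_neg : (k : ZMod C.len) = -k := by
    rw [eq_neg_iff_add_eq_zero, ← Nat.cast_add, ← two_mul, ← hlen, ZMod.natCast_self]
  have hadj : ∀ t < k, (cayley (DyerGroup Δ) Δ.XS).Adj (C.toFun (j - t))
      (C.toFun (j - (t + 1 : ℕ))) := fun t _ => by
    simpa [sub_sub] using C.adj_sub_one (j - t)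
  have hstart : C.toFun (j - (0 : ℕ)) = γ.toFun i := by simpa using (hsub 0 k.zero_le).symm
  have hend : C.toFun (j - k) = γ.toFun (i + k) := by
    rw [hsub k le_rfl, sub_eq_add_neg, ← hk_neg]
  refine ⟨γ.splice i k (fun t => C.toFun (j - t)) hadj hstart hend hik, rfl,
    fun t ht => γ.splice_apply_of_le_or_le hadj hstart hend hik (.inl ht),
    fun t ht => γ.splice_apply_of_le_or_le hadj hstart hend hik (.inr ht),
    fun t ht => γ.splice_apply_add hadj hstart hend hik ht,
    γ.fellowTravel_splice hadj hstart hend hik fun t ht => ?_⟩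
  have hdist := C.two_mul_dist_le_len (j + t) (j - t)
  rw [hsub t ht]
  omega

/-- Applying a flip around a dihedral cycle `𝒞` of length `2m` to a
path `γ` of `Cay(D, X_S)` whose intersection with `𝒞` is a subsegment of `𝒞` of length
`m = ℓ(𝒞)/2` yields a path of the same length which `M`-fellow travels `γ`, where
`M = max{m(e) : e ∈ E(𝒢)}`. -/
theorem dyer_flip {V : Type u} [Fintype V] (Δ : DyerGraph V) (M : ℕ)
    (hM : M = sSup {n : ℕ | ∃ u v : V, Δ.graph.Adj u v ∧ Δ.m u v = n})
    (γ : GraphPath (cayley (DyerGroup Δ) Δ.XS))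
    (C : GraphCycle (cayley (DyerGroup Δ) Δ.XS)) (hC : Δ.IsDihedral C)
    (k : ℕ) (hlen : C.len = 2 * k)
    (i : ℕ) (hik : i + k ≤ γ.len) (j : ZMod C.len)
    (hsub : ∀ t : ℕ, t ≤ k → γ.toFun (i + t) = C.toFun (j + (t : ZMod C.len)))
    (hexact : ∀ t : ℕ, t ≤ γ.len → γ.toFun t ∈ Set.range C.toFun →
      i ≤ t ∧ t ≤ i + k) :
    ∃ γ' : GraphPath (cayley (DyerGroup Δ) Δ.XS),
      γ'.len = γ.len ∧
      (∀ t : ℕ, t ≤ i → γ'.toFun t = γ.toFun t) ∧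
      (∀ t : ℕ, i + k ≤ t → γ'.toFun t = γ.toFun t) ∧
      (∀ t : ℕ, t ≤ k → γ'.toFun (i + t) = C.toFun (j - (t : ZMod C.len))) ∧
      FellowTravel M γ γ' :=
  dyer_flip_general Δ M hM γ C hC k hlen i hik j hsub
end
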